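/- Let $\delta > 0$, $0 < s < m/2$, and let $\Delta$ be an $m \times m$ matrix satisfying $|u^T \Delta v| \le \delta$ for all unit vectors $u, v$ each with at most $s$ nonzero coordinates. Then for all $v \in \mathbb{R}^m$, $|v^T \Delta v| \le 4\delta\,(\|v\|_2^2 + \|v\|_1^2/s)$. -/

import Mathlib

/-!
Sort the coordinates of `v` by decreasing modulus and cut them into consecutive blocks of `s`
("shelling"). Each block is `s`-sparse, so by bilinearity `|vᵀΔv| ≤ δ (∑ⱼ ‖vⱼ‖₂)²`. The first
block has `‖v₀‖₂ ≤ ‖v‖₂`, and every entry of block `j + 1` is at most the mean modulus of block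
`j`, whence `‖vⱼ₊₁‖₂ ≤ ‖vⱼ‖₁ / √s`. Summing, `∑ⱼ ‖vⱼ‖₂ ≤ ‖v‖₂ + ‖v‖₁ / √s`, and
`(a + b)² ≤ 2 (a² + b²)` finishes.
-/

open Finset Matrix

lemma Real.sqrt_mul_div_self (x y : ℝ) : √y * (x / y) = x / √y := by
  rw [mul_div_left_comm, Real.sqrt_div_self, div_eq_mul_inv]

lemma exists_subset_card_eq_forall_le {ι α : Type*} [DecidableEq ι] [LinearOrder α] (f : ι → α)
    (S : Finset ι) {k : ℕ} (hk : k ≤ S.card) :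
    ∃ T ⊆ S, T.card = k ∧ ∀ i ∈ T, ∀ j ∈ S \ T, f j ≤ f i := by
  induction k with
  | zero => exact ⟨∅, empty_subset S, card_empty, by simp⟩
  | succ k ih =>
    obtain ⟨T, hTS, hTk, hT⟩ := ih (Nat.le_of_succ_le hk)
    have hne : (S \ T).Nonempty := by
      rw [← card_pos, card_sdiff_of_subset hTS]
      omega
    obtain ⟨a, ha, hmax⟩ := exists_max_image (S \ T) f hne
    have haT : a ∉ T := (mem_sdiff.1 ha).2
    refine ⟨insert a T, insert_subset (mem_sdiff.1 ha).1 hTS,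
      by rw [card_insert_of_notMem haT, hTk], fun i hi j hj => ?_⟩
    have hj' : j ∈ S \ T := sdiff_subset_sdiff le_rfl (subset_insert a T) hj
    rcases mem_insert.1 hi with rfl | hi
    · exact hmax j hj'
    · exact hT i hi j hj'

lemma abs_le_sum_abs_div_card_of_forall_le {ι : Type*} [DecidableEq ι] {v : ι → ℝ}
    {S T : Finset ι} (hv : ∀ i ∉ S, v i = 0) (hT : T.Nonempty) (htop : ∀ i ∈ T, ∀ j ∈ S \ T, |v j| ≤ |v i|)
    {j : ι} (hj : j ∉ T) : |v j| ≤ (∑ i ∈ T, |v i|) / T.card := by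
  by_cases hjS : j ∈ S
  · rw [← expect_eq_sum_div_card]
    exact le_expect hT fun i hi => htop i hi j (mem_sdiff.2 ⟨hjS, hj⟩)
  · rw [hv j hjS, abs_zero]
    positivity

section SparseDecomp

variable {ι : Type*} {s : ℕ}

def IsSparse (s : ℕ) (u : ι → ℝ) : Prop :=
  ∃ T : Finset ι, T.card ≤ s ∧ ∀ i ∉ T, u i = 0

lemma IsSparse.smul {u : ι → ℝ} (hu : IsSparse s u) (c : ℝ) : IsSparse s (c • u) :=
  let ⟨T, hT, hu⟩ := hu
  ⟨T, hT, fun i hi => by simp [hu i hi]⟩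

variable [Fintype ι] {δ : ℝ} {Δ : Matrix ι ι ℝ}

def SparseBilinearBound (s : ℕ) (δ : ℝ) (Δ : Matrix ι ι ℝ) : Prop :=
  ∀ u w : ι → ℝ, ∑ i, u i ^ 2 = 1 → ∑ i, w i ^ 2 = 1 → IsSparse s u → IsSparse s w →
    |u ⬝ᵥ Δ *ᵥ w| ≤ δ

lemma norm_toLp_sq (u : ι → ℝ) : ‖WithLp.toLp 2 u‖ ^ 2 = ∑ i, u i ^ 2 := by
  simp [EuclideanSpace.norm_sq_eq]

lemma IsSparse.norm_toLp_le {u : ι → ℝ} (hu : IsSparse s u) {M : ℝ} (hM0 : 0 ≤ M)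
    (hM : ∀ i, |u i| ≤ M) : ‖WithLp.toLp 2 u‖ ≤ √s * M := by
  obtain ⟨T, hT, hu⟩ := hu
  refine abs_le_of_sq_le_sq' ?_ (by positivity) |>.2
  rw [norm_toLp_sq, mul_pow, Real.sq_sqrt (Nat.cast_nonneg s),
    ← sum_subset (subset_univ T) fun i _ hi => by simp [hu i hi]]
  calc ∑ i ∈ T, u i ^ 2 ≤ ∑ _i ∈ T, M ^ 2 :=
        sum_le_sum fun i _ => sq_abs (u i) ▸ pow_le_pow_left₀ (abs_nonneg _) (hM i) 2
    _ ≤ s * M ^ 2 := by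
        rw [sum_const, nsmul_eq_mul]
        gcongr

lemma SparseBilinearBound.abs_dotProduct_mulVec_le (hΔ : SparseBilinearBound s δ Δ)
    {u w : ι → ℝ} (hu : IsSparse s u) (hw : IsSparse s w) :
    |u ⬝ᵥ Δ *ᵥ w| ≤ δ * ‖WithLp.toLp 2 u‖ * ‖WithLp.toLp 2 w‖ := by
  rcases eq_or_ne u 0 with rfl | hu0
  · simp
  rcases eq_or_ne w 0 with rfl | hw0
  · simp
  set a := ‖WithLp.toLp 2 u‖
  set b := ‖WithLp.toLp 2 w‖
  have ha : 0 < a := norm_pos_iff.2 (by simpa using hu0)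
  have hb : 0 < b := norm_pos_iff.2 (by simpa using hw0)
  have unit {x : ι → ℝ} (hx : 0 < ‖WithLp.toLp 2 x‖) :
      ∑ i, (‖WithLp.toLp 2 x‖⁻¹ • x) i ^ 2 = 1 := by
    rw [← norm_toLp_sq, WithLp.toLp_smul, norm_smul, norm_inv, norm_norm,
      inv_mul_cancel₀ hx.ne', one_pow]
  have key := hΔ _ _ (unit ha) (unit hb) (hu.smul a⁻¹) (hw.smul b⁻¹)
  rw [smul_dotProduct, mulVec_smul, dotProduct_smul, smul_eq_mul, smul_eq_mul, abs_mul, abs_mul,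
    abs_inv, abs_inv, abs_of_pos ha, abs_of_pos hb, ← mul_assoc, ← mul_inv,
    inv_mul_le_iff₀ (by positivity)] at key
  linarith

lemma SparseBilinearBound.abs_list_sum_dotProduct_mulVec_list_sum_le
    (hΔ : SparseBilinearBound s δ Δ) (l l' : List (ι → ℝ))
    (hl : ∀ u ∈ l, IsSparse s u) (hl' : ∀ w ∈ l', IsSparse s w) :
    |l.sum ⬝ᵥ Δ *ᵥ l'.sum| ≤
      δ * (l.map fun u => ‖WithLp.toLp 2 u‖).sum * (l'.map fun w => ‖WithLp.toLp 2 w‖).sum := by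
  have sparse_left {u : ι → ℝ} (hu : IsSparse s u) :
      |u ⬝ᵥ Δ *ᵥ l'.sum| ≤
        δ * ‖WithLp.toLp 2 u‖ * (l'.map fun w => ‖WithLp.toLp 2 w‖).sum := by
    induction l' with
    | nil => simp
    | cons w l' ih =>
      rw [List.forall_mem_cons] at hl'
      simp only [List.sum_cons, List.map_cons, mulVec_add, dotProduct_add, mul_add]
      exact (abs_add_le _ _).trans
        (add_le_add (hΔ.abs_dotProduct_mulVec_le hu hl'.1) (ih hl'.2))
  induction l with
  | nil => simp
  | cons u l ih =>
    rw [List.forall_mem_cons] at hl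
    simp only [List.sum_cons, List.map_cons, add_dotProduct, mul_add, add_mul]
    exact (abs_add_le _ _).trans (add_le_add (sparse_left hl.1) (ih hl.2))

def HasSparseDecomp (s : ℕ) (v : ι → ℝ) (r : ℝ) : Prop :=
  ∃ l : List (ι → ℝ), (∀ b ∈ l, IsSparse s b) ∧ l.sum = v ∧
    (l.map fun b => ‖WithLp.toLp 2 b‖).sum ≤ r

namespace HasSparseDecomp

variable {u v w : ι → ℝ} {a b r : ℝ}

lemma of_isSparse (hv : IsSparse s v) : HasSparseDecomp s v ‖WithLp.toLp 2 v‖ :=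
  ⟨[v], by simpa using hv, by simp, by simp⟩

lemma mono (hv : HasSparseDecomp s v r) (hr : r ≤ b) : HasSparseDecomp s v b :=
  let ⟨l, hl, hsum, hnorm⟩ := hv
  ⟨l, hl, hsum, hnorm.trans hr⟩

lemma add (hu : HasSparseDecomp s u a) (hw : HasSparseDecomp s w b) :
    HasSparseDecomp s (u + w) (a + b) :=
  let ⟨l, hl, hlsum, hlnorm⟩ := hu
  let ⟨l', hl', hl'sum, hl'norm⟩ := hw
  ⟨l ++ l', by simpa [or_imp, forall_and] using And.intro hl hl', by simp [hlsum, hl'sum],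
    by simpa using add_le_add hlnorm hl'norm⟩

lemma abs_dotProduct_mulVec_le (hδ : 0 ≤ δ) (hΔ : SparseBilinearBound s δ Δ)
    (hu : HasSparseDecomp s u a) (hw : HasSparseDecomp s w b) :
    |u ⬝ᵥ Δ *ᵥ w| ≤ δ * a * b := by
  obtain ⟨l, hl, rfl, hlnorm⟩ := hu
  obtain ⟨l', hl', rfl, hl'norm⟩ := hw
  have hnonneg (l : List (ι → ℝ)) : 0 ≤ (l.map fun b => ‖WithLp.toLp 2 b‖).sum :=
    List.sum_nonneg (by simp)
  refine (hΔ.abs_list_sum_dotProduct_mulVec_list_sum_le l l' hl hl').trans ?_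
  exact mul_le_mul (mul_le_mul_of_nonneg_left hlnorm hδ) hl'norm (hnonneg l')
    (mul_nonneg hδ ((hnonneg l).trans hlnorm))

/-- The two bounds in the `min` serve the first block and the later blocks respectively. -/
lemma of_support_subset [DecidableEq ι] (hs : 0 < s) (S : Finset ι) (v : ι → ℝ)
    (hv : ∀ i ∉ S, v i = 0) (M : ℝ) (hM0 : 0 ≤ M) (hM : ∀ i, |v i| ≤ M) :
    HasSparseDecomp s v (min (√s * M) ‖WithLp.toLp 2 v‖ + (∑ i, |v i|) / √s) := by
  induction S using Finset.strongInduction generalizing v M with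
  | H S ih =>
  by_cases hS : S.card ≤ s
  · refine (of_isSparse ⟨S, hS, hv⟩).mono ?_
    exact le_add_of_le_of_nonneg (le_min ((IsSparse.norm_toLp_le ⟨S, hS, hv⟩ hM0 hM)) le_rfl)
      (by positivity)
  obtain ⟨T, hTS, hTcard, htop⟩ :=
    exists_subset_card_eq_forall_le (fun i => |v i|) S (le_of_not_ge hS)
  have hTne : T.Nonempty := by rw [← card_pos, hTcard]; exact hs
  set head : ι → ℝ := fun i => if i ∈ T then v i else 0
  set tail : ι → ℝ := fun i => if i ∈ T then 0 else v i
  have hsplit : head + tail = v := by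
    funext i; by_cases hi : i ∈ T <;> simp [head, tail, hi]
  have hl1 : ∑ i, |v i| = ∑ i ∈ T, |v i| + ∑ i, |tail i| := by
    rw [← Fintype.sum_ite_mem T, ← sum_add_distrib]
    exact sum_congr rfl fun i _ => by by_cases hi : i ∈ T <;> simp [tail, hi]
  have hhead : IsSparse s head := ⟨T, hTcard.le, fun i hi => by simp [head, hi]⟩
  have hhead_norm : ‖WithLp.toLp 2 head‖ ≤ min (√s * M) ‖WithLp.toLp 2 v‖ := by
    refine le_min (hhead.norm_toLp_le hM0 fun i => ?_) ?_
    · by_cases hi : i ∈ T <;> simp [head, hi, hM0, hM i]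
    · simp only [EuclideanSpace.norm_eq]
      gcongr with i
      by_cases hi : i ∈ T <;> simp [head, hi]
  have htail_le : ∀ i, |tail i| ≤ (∑ i ∈ T, |v i|) / s := fun j => by
    by_cases hjT : j ∈ T
    · simp [tail, hjT]; positivity
    · simpa [tail, hjT, hTcard] using abs_le_sum_abs_div_card_of_forall_le hv hTne htop hjT
  have htail_supp : ∀ i ∉ S \ T, tail i = 0 := fun i hi => by
    by_cases hiT : i ∈ T
    · simp [tail, hiT]
    · simpa [tail, hiT] using hv i fun hiS => hi (mem_sdiff.2 ⟨hiS, hiT⟩)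
  have htail := ih (S \ T) (sdiff_ssubset hTS hTne) tail htail_supp _ (by positivity) htail_le
  have hv_decomp := (of_isSparse hhead).add htail
  rw [hsplit] at hv_decomp
  refine hv_decomp.mono ?_
  rw [hl1, Real.sqrt_mul_div_self, add_div]
  linarith [min_le_left ((∑ i ∈ T, |v i|) / √s) ‖WithLp.toLp 2 tail‖]

lemma norm_add_sum_abs_div_sqrt [DecidableEq ι] (hs : 0 < s) (v : ι → ℝ) :
    HasSparseDecomp s v (‖WithLp.toLp 2 v‖ + (∑ i, |v i|) / √s) := by
  refine (of_support_subset hs univ v (by simp) (∑ i, |v i|) (by positivity)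
    fun i => single_le_sum (fun j _ => abs_nonneg (v j)) (mem_univ i)).mono ?_
  gcongr
  exact min_le_right _ _

end HasSparseDecomp

end SparseDecomp

theorem quadratic_form_bound_all_vectors_general {m : ℕ} (s : ℕ) (hs : 0 < s)
    (δ : ℝ) (hδ : 0 < δ) (Δ : Matrix (Fin m) (Fin m) ℝ)
    (hΔ : ∀ u v : Fin m → ℝ,
      (∑ i, u i ^ 2) = 1 → (∑ i, v i ^ 2) = 1 →
      (∃ T : Finset (Fin m), T.card ≤ s ∧ ∀ i ∉ T, u i = 0) →
      (∃ T : Finset (Fin m), T.card ≤ s ∧ ∀ i ∉ T, v i = 0) →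
      |u ⬝ᵥ Δ.mulVec v| ≤ δ) :
    ∀ v : Fin m → ℝ,
      |v ⬝ᵥ Δ.mulVec v| ≤ 4 * δ * ((∑ i, v i ^ 2) + (∑ i, |v i|) ^ 2 / s) := by
  intro v
  set r := ‖WithLp.toLp 2 v‖ + (∑ i, |v i|) / √s
  have hv : HasSparseDecomp s v r := HasSparseDecomp.norm_add_sum_abs_div_sqrt hs v
  have hr : r ^ 2 ≤ 2 * ((∑ i, v i ^ 2) + (∑ i, |v i|) ^ 2 / s) := by
    have hdiv : ((∑ i, |v i|) / √s) ^ 2 = (∑ i, |v i|) ^ 2 / s := by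
      rw [div_pow, Real.sq_sqrt (Nat.cast_nonneg s)]
    rw [← norm_toLp_sq, ← hdiv]
    exact add_sq_le
  calc |v ⬝ᵥ Δ *ᵥ v| ≤ δ * r ^ 2 := by
        rw [sq, ← mul_assoc]; exact hv.abs_dotProduct_mulVec_le hδ.le hΔ hv
    _ ≤ δ * (2 * ((∑ i, v i ^ 2) + (∑ i, |v i|) ^ 2 / s)) := by gcongr
    _ ≤ 4 * δ * ((∑ i, v i ^ 2) + (∑ i, |v i|) ^ 2 / s) := by
        nlinarith [hδ.le, (by positivity : 0 ≤ (∑ i, v i ^ 2) + (∑ i, |v i|) ^ 2 / s)]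

/-- If |uᵀΔv| ≤ δ for all s-sparse unit vectors u, v, then for every v ∈ ℝᵐ,
|vᵀΔv| ≤ 4δ (‖v‖₂² + ‖v‖₁²/s). -/
theorem quadratic_form_bound_all_vectors {m : ℕ} (s : ℕ) (hs : 0 < s)
    (hsm : (s : ℝ) < m / 2) (δ : ℝ) (hδ : 0 < δ) (Δ : Matrix (Fin m) (Fin m) ℝ)
    (hΔ : ∀ u v : Fin m → ℝ,
      (∑ i, u i ^ 2) = 1 → (∑ i, v i ^ 2) = 1 →
      (∃ T : Finset (Fin m), T.card ≤ s ∧ ∀ i ∉ T, u i = 0) →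
      (∃ T : Finset (Fin m), T.card ≤ s ∧ ∀ i ∉ T, v i = 0) →
      |u ⬝ᵥ Δ.mulVec v| ≤ δ) :
    ∀ v : Fin m → ℝ,
      |v ⬝ᵥ Δ.mulVec v| ≤ 4 * δ * ((∑ i, v i ^ 2) + (∑ i, |v i|) ^ 2 / s) :=
  quadratic_form_bound_all_vectors_general s hs δ hδ Δ hΔ
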